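/- arXiv:1810.08522 — 3 statements merged into one kernel-verified Lean document; each statement's English description precedes it below -/
import Mathlib

section
/- Let A be a bounded linear operator on a complex Hilbert space H, and let f, g be nonnegative continuous functions on [0,∞) satisfying f(t)g(t) = t for all t ≥ 0. Then w(A) ≤ (1/2) · w( f(|A|)² + g(|A*|)² ). -/
variable {H : Type*} [NormedAddCommGroup H] [InnerProductSpace ℂ H] [CompleteSpace H]

/-- The numerical radius `w(T) = sup { |⟨Tx, x⟩| : ‖x‖ = 1 }`. -/
noncomputable def numRad (T : H →L[ℂ] H) : ℝ :=
  ⨆ x : {x : H // ‖x‖ = 1}, ‖(inner ℂ (T x) x : ℂ)‖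

/-- The spectral radius `r(T)` as a real number. -/
noncomputable def specRad (T : H →L[ℂ] H) : ℝ :=
  (spectralRadius ℂ T).toReal

/-- `ℓ(T) = inf { ‖Tx‖ : ‖x‖ = 1 }`. -/
noncomputable def lowB (T : H →L[ℂ] H) : ℝ :=
  ⨅ x : {x : H // ‖x‖ = 1}, ‖T x‖

/-- The absolute value `|T| = (T*T)^(1/2)`. -/
noncomputable def oAbs (T : H →L[ℂ] H) : H →L[ℂ] H :=
  cfc Real.sqrt (ContinuousLinearMap.adjoint T * T)

/-- Real powers of a (positive) operator via the continuous functional calculus. -/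
noncomputable def oPow (T : H →L[ℂ] H) (r : ℝ) : H →L[ℂ] H :=
  cfc (fun t : ℝ => t ^ r) T

/-!
Write `S = |A|` and `R = |A*|`. Since `A (A*A) = (AA*) A`, density of polynomials gives
`A k(A*A) = k(AA*) A`, hence `A k(S) = k(R) A`, for every `k` continuous on `[0, ∞)`.
For `ε > 0` and `g_ε = g + ε` this yields `⟨Ax, x⟩ = ⟨A g_ε(S)⁻¹ x, g_ε(R) x⟩`; as
`‖Ay‖ = ‖Sy‖` and `t / g_ε(t) ≤ f(t)`, the first vector has norm at most `‖f(S) x‖`.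
Letting `ε → 0` gives the mixed Schwarz inequality
`|⟨Ax, x⟩| ≤ ‖f(S) x‖ ‖g(R) x‖ ≤ (‖f(S) x‖² + ‖g(R) x‖²) / 2 = ⟨(f(S)² + g(R)²) x, x⟩ / 2`.
-/

open ContinuousLinearMap

theorem SemiconjBy.cfc_real {A : Type*} [Ring A] [StarRing A] [Algebra ℝ A] [TopologicalSpace A]
    [IsTopologicalRing A] [T2Space A] [ContinuousFunctionalCalculus ℝ A IsSelfAdjoint]
    {x a b : A} (ha : IsSelfAdjoint a) (hb : IsSelfAdjoint b) (h : SemiconjBy x a b)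
    (k : ℝ → ℝ) (hk : ContinuousOn k (spectrum ℝ a ∪ spectrum ℝ b)) :
    SemiconjBy x (cfc k a) (cfc k b) := by
  set s := spectrum ℝ a ∪ spectrum ℝ b
  have : CompactSpace s := isCompact_iff_compactSpace.mp
    ((ContinuousFunctionalCalculus.isCompact_spectrum a).union
      (ContinuousFunctionalCalculus.isCompact_spectrum b))
  have hsa : spectrum ℝ a ⊆ s := Set.subset_union_left
  have hsb : spectrum ℝ b ⊆ s := Set.subset_union_right
  suffices key : ∀ φ : C(s, ℝ),
      SemiconjBy x (cfcHomSuperset ha hsa φ) (cfcHomSuperset hb hsb φ) by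
    convert key ⟨_, hk.domRestrict⟩ using 1
    · rw [cfcHomSuperset_apply, cfc_apply k a ha (hk.mono hsa)]; rfl
    · rw [cfcHomSuperset_apply, cfc_apply k b hb (hk.mono hsb)]; rfl
  intro φ
  induction φ using ContinuousMap.induction_on_of_compact with
  | const r =>
    rw [show ContinuousMap.const s r = algebraMap ℝ C(s, ℝ) r from rfl, AlgHomClass.commutes,
      AlgHomClass.commutes]
    exact Algebra.commute_algebraMap_right r x
  | id => simpa only [cfcHomSuperset_id] using h
  | star_id => simpa only [map_star, cfcHomSuperset_id, ha.star_eq, hb.star_eq] using h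
  | add φ ψ hφ hψ => simpa only [map_add] using hφ.add_right hψ
  | mul φ ψ hφ hψ => simpa only [map_mul] using hφ.mul_right hψ
  | frequently φ hφ =>
    have hclosed : IsClosed {ψ : C(s, ℝ) |
        SemiconjBy x (cfcHomSuperset ha hsa ψ) (cfcHomSuperset hb hsb ψ)} :=
      isClosed_eq (by have := cfcHomSuperset_continuous ha hsa; fun_prop)
        (by have := cfcHomSuperset_continuous hb hsb; fun_prop)
    exact hclosed.closure_subset (mem_closure_of_frequently_of_tendsto hφ Filter.tendsto_id)

section CStarAlgebra

variable {A : Type*} [CStarAlgebra A] [PartialOrder A] [StarOrderedRing A]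

theorem CFC.abs_eq_cfc_sqrt (a : A) : CFC.abs a = cfc Real.sqrt (star a * a) := by
  rw [CFC.abs, CFC.sqrt_eq_real_sqrt _ (star_mul_self_nonneg a),
    cfcₙ_eq_cfc (hf0 := Real.sqrt_zero)]

theorem CFC.semiconjBy_abs_abs_star (a : A) : SemiconjBy a (CFC.abs a) (CFC.abs (star a)) := by
  rw [CFC.abs_eq_cfc_sqrt, CFC.abs_eq_cfc_sqrt, star_star]
  exact SemiconjBy.cfc_real (.star_mul_self a) (.mul_star_self a) (mul_assoc _ _ _).symm
    Real.sqrt Real.continuous_sqrt.continuousOn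

theorem CFC.spectrum_abs_subset_Ici (a : A) : spectrum ℝ (CFC.abs a) ⊆ Set.Ici 0 :=
  fun _ ht => spectrum_nonneg_of_nonneg (CFC.abs_nonneg a) ht

theorem CFC.semiconjBy_cfc_abs_cfc_abs_star (a : A) {k : ℝ → ℝ}
    (hk : ContinuousOn k (Set.Ici 0)) :
    SemiconjBy a (cfc k (CFC.abs a)) (cfc k (CFC.abs (star a))) :=
  (CFC.semiconjBy_abs_abs_star a).cfc_real (CFC.abs_nonneg a).isSelfAdjoint
    (CFC.abs_nonneg _).isSelfAdjoint k <|
      hk.mono (Set.union_subset (CFC.spectrum_abs_subset_Ici a) (CFC.spectrum_abs_subset_Ici _))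

end CStarAlgebra

theorem ContinuousLinearMap.norm_apply_le_of_star_mul_self_le {P Q : H →L[ℂ] H}
    (h : star P * P ≤ star Q * Q) (x : H) : ‖P x‖ ≤ ‖Q x‖ := by
  have hPQ := ((le_def _ _).mp h).re_inner_nonneg_left x
  rw [sub_apply, inner_sub_left, map_sub, sub_nonneg, star_eq_adjoint, star_eq_adjoint] at hPQ
  have hsq : ‖P x‖ ^ 2 ≤ ‖Q x‖ ^ 2 := by
    rw [apply_norm_sq_eq_inner_adjoint_left, apply_norm_sq_eq_inner_adjoint_left]
    exact hPQ
  exact le_of_pow_le_pow_left₀ two_ne_zero (norm_nonneg _) hsq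

theorem CFC.norm_abs_apply (T : H →L[ℂ] H) (x : H) : ‖CFC.abs T x‖ = ‖T x‖ := by
  have h : star (CFC.abs T) * CFC.abs T = star T * T := by
    rw [(CFC.abs_nonneg T).isSelfAdjoint.star_eq, CFC.abs_mul_abs]
  exact le_antisymm (norm_apply_le_of_star_mul_self_le h.le x)
    (norm_apply_le_of_star_mul_self_le h.ge x)

theorem ContinuousLinearMap.norm_cfc_apply_le {S : H →L[ℂ] H} {φ ψ : ℝ → ℝ}
    (hφ : ContinuousOn φ (spectrum ℝ S)) (hψ : ContinuousOn ψ (spectrum ℝ S))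
    (h : ∀ t ∈ spectrum ℝ S, |φ t| ≤ |ψ t|) (x : H) : ‖cfc φ S x‖ ≤ ‖cfc ψ S x‖ := by
  refine norm_apply_le_of_star_mul_self_le ?_ x
  rw [(cfc_predicate φ S).star_eq, (cfc_predicate ψ S).star_eq, ← cfc_mul φ φ S, ← cfc_mul ψ ψ S]
  exact cfc_mono fun t ht => by
    simpa [abs_mul_abs_self] using mul_self_le_mul_self (abs_nonneg _) (h t ht)

theorem norm_inner_apply_self_le_of_le_mul (T : H →L[ℂ] H) {f g : ℝ → ℝ}
    (hf : ContinuousOn f (Set.Ici 0)) (hg : ContinuousOn g (Set.Ici 0))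
    (hg_pos : ∀ t, 0 ≤ t → 0 < g t) (hfg : ∀ t, 0 ≤ t → t ≤ f t * g t) (x : H) :
    ‖inner ℂ (T x) x‖ ≤ ‖cfc f (CFC.abs T) x‖ * ‖cfc g (CFC.abs (star T)) x‖ := by
  set S := CFC.abs T
  set R := CFC.abs (star T)
  have hS := CFC.spectrum_abs_subset_Ici T
  have hR := CFC.spectrum_abs_subset_Ici (star T)
  have hginv : ContinuousOn (fun t => (g t)⁻¹) (Set.Ici 0) :=
    hg.inv₀ fun t ht => (hg_pos t ht).ne'
  set y := T (cfc (fun t => (g t)⁻¹) S x)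
  have hTx : T x = cfc g R y := by
    have hinv : cfc g R * cfc (fun t => (g t)⁻¹) R = 1 := by
      rw [← cfc_mul g _ R (hg.mono hR) (hginv.mono hR), ← cfc_one ℝ R]
      exact cfc_congr fun t ht => mul_inv_cancel₀ (hg_pos t (hR ht)).ne'
    calc T x = (cfc g R * cfc (fun t => (g t)⁻¹) R * T) x := by rw [hinv, one_mul]
      _ = cfc g R y := by
        rw [mul_assoc, ← (CFC.semiconjBy_cfc_abs_cfc_abs_star T hginv).eq]; rfl
  have hy : ‖y‖ ≤ ‖cfc f S x‖ := by
    have hSy : S * cfc (fun t => (g t)⁻¹) S = cfc (fun t => t * (g t)⁻¹) S := by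
      rw [cfc_mul (fun t => t) _ S continuousOn_id (hginv.mono hS), cfc_id' ℝ S]
    rw [← CFC.norm_abs_apply]
    change ‖(S * cfc (fun t => (g t)⁻¹) S) x‖ ≤ _
    rw [hSy]
    refine norm_cfc_apply_le (φ := fun t => t * (g t)⁻¹) ((continuousOn_id.mul hginv).mono hS)
      (hf.mono hS) (fun t ht => ?_) x
    have ht : 0 ≤ t := hS ht
    have hgt := hg_pos t ht
    rw [abs_of_nonneg (by positivity), ← div_eq_mul_inv, div_le_iff₀ hgt]
    exact (hfg t ht).trans (mul_le_mul_of_nonneg_right (le_abs_self _) hgt.le)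
  calc ‖inner ℂ (T x) x‖ = ‖inner ℂ y (cfc g R x)‖ := by
        rw [hTx]; exact congrArg norm ((cfc_predicate g R).isSymmetric y x)
    _ ≤ ‖y‖ * ‖cfc g R x‖ := norm_inner_le_norm _ _
    _ ≤ ‖cfc f S x‖ * ‖cfc g R x‖ := by gcongr

theorem norm_inner_apply_self_le_of_mul_eq (T : H →L[ℂ] H) {f g : ℝ → ℝ}
    (hf : ContinuousOn f (Set.Ici 0)) (hg : ContinuousOn g (Set.Ici 0))
    (hf_nonneg : ∀ t, 0 ≤ t → 0 ≤ f t) (hg_nonneg : ∀ t, 0 ≤ t → 0 ≤ g t)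
    (hfg : ∀ t, 0 ≤ t → f t * g t = t) (x : H) :
    ‖inner ℂ (T x) x‖ ≤ ‖cfc f (CFC.abs T) x‖ * ‖cfc g (CFC.abs (star T)) x‖ := by
  set R := CFC.abs (star T)
  have hε : ∀ ε : ℝ, 0 < ε →
      ‖inner ℂ (T x) x‖ ≤ ‖cfc f (CFC.abs T) x‖ * ‖cfc g R x + ε • x‖ := by
    intro ε hε
    have hreg := norm_inner_apply_self_le_of_le_mul T (g := fun t => g t + ε) hf
      (hg.add continuousOn_const)
      (fun t ht => add_pos_of_nonneg_of_pos (hg_nonneg t ht) hε)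
      (fun t ht => by nlinarith [hfg t ht, hf_nonneg t ht]) x
    rwa [cfc_add_const ε g R (hg.mono (CFC.spectrum_abs_subset_Ici _)), add_apply,
      ContinuousLinearMap.algebraMap_apply] at hreg
  have hlim : Filter.Tendsto (fun ε : ℝ => ‖cfc f (CFC.abs T) x‖ * ‖cfc g R x + ε • x‖)
      (nhdsWithin 0 (Set.Ioi 0)) (nhds (‖cfc f (CFC.abs T) x‖ * ‖cfc g R x‖)) := by
    have hcont : Continuous fun ε : ℝ => ‖cfc f (CFC.abs T) x‖ * ‖cfc g R x + ε • x‖ := by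
      fun_prop
    simpa using (hcont.tendsto 0).mono_left nhdsWithin_le_nhds
  exact ge_of_tendsto hlim (eventually_nhdsWithin_of_forall fun ε hε' => hε ε hε')

theorem oAbs_eq_abs (T : H →L[ℂ] H) : oAbs T = CFC.abs T := by
  rw [oAbs, CFC.abs_eq_cfc_sqrt, star_eq_adjoint]

theorem IsSelfAdjoint.norm_apply_sq {F : H →L[ℂ] H} (hF : IsSelfAdjoint F) (x : H) :
    ‖F x‖ ^ 2 = RCLike.re (inner ℂ ((F ^ 2) x) x) := by
  rw [apply_norm_sq_eq_inner_adjoint_left, hF.adjoint_eq, sq]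
  rfl

omit [CompleteSpace H] in
theorem numRad_nonneg (T : H →L[ℂ] H) : 0 ≤ numRad T :=
  Real.iSup_nonneg fun _ => norm_nonneg _

omit [CompleteSpace H] in
theorem norm_inner_le_numRad (T : H →L[ℂ] H) {x : H} (hx : ‖x‖ = 1) :
    ‖inner ℂ (T x) x‖ ≤ numRad T := by
  refine le_ciSup (f := fun x : {x : H // ‖x‖ = 1} => ‖inner ℂ (T x) x‖) ⟨‖T‖, ?_⟩ ⟨x, hx⟩
  rintro _ ⟨⟨y, hy⟩, rfl⟩
  simpa [hy] using (norm_inner_le_norm (T y) y).trans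
    (mul_le_mul_of_nonneg_right (T.le_opNorm y) (norm_nonneg y))

omit [CompleteSpace H] in
theorem numRad_le {T : H →L[ℂ] H} {c : ℝ} (hc : 0 ≤ c)
    (h : ∀ x : H, ‖x‖ = 1 → ‖inner ℂ (T x) x‖ ≤ c) : numRad T ≤ c :=
  Real.iSup_le (fun x => h x x.2) hc

theorem numRad_le_half_numRad_sq_add_sq
    (A : H →L[ℂ] H) (f g : ℝ → ℝ)
    (hf_cont : ContinuousOn f (Set.Ici 0)) (hg_cont : ContinuousOn g (Set.Ici 0))
    (hf_nonneg : ∀ t : ℝ, 0 ≤ t → 0 ≤ f t) (hg_nonneg : ∀ t : ℝ, 0 ≤ t → 0 ≤ g t)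
    (hfg : ∀ t : ℝ, 0 ≤ t → f t * g t = t) :
    numRad A ≤ (1 / 2) *
      numRad ((cfc f (oAbs A)) ^ 2 + (cfc g (oAbs (ContinuousLinearMap.adjoint A))) ^ 2) := by
  rw [← star_eq_adjoint, oAbs_eq_abs, oAbs_eq_abs]
  set F := cfc f (CFC.abs A)
  set G := cfc g (CFC.abs (star A))
  refine numRad_le (mul_nonneg (by norm_num) (numRad_nonneg _)) fun x hx => ?_
  have hF : IsSelfAdjoint F := cfc_predicate _ _
  have hG : IsSelfAdjoint G := cfc_predicate _ _
  have hsum : ‖F x‖ ^ 2 + ‖G x‖ ^ 2 = RCLike.re (inner ℂ ((F ^ 2 + G ^ 2) x) x) := by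
    rw [hF.norm_apply_sq, hG.norm_apply_sq, add_apply, inner_add_left, map_add]
  calc ‖inner ℂ (A x) x‖ ≤ ‖F x‖ * ‖G x‖ :=
        norm_inner_apply_self_le_of_mul_eq A hf_cont hg_cont hf_nonneg hg_nonneg hfg x
    _ ≤ (1 / 2) * (‖F x‖ ^ 2 + ‖G x‖ ^ 2) := by nlinarith [sq_nonneg (‖F x‖ - ‖G x‖)]
    _ ≤ (1 / 2) * ‖inner ℂ ((F ^ 2 + G ^ 2) x) x‖ := by
        rw [hsum]; gcongr; exact RCLike.re_le_norm _
    _ ≤ (1 / 2) * numRad (F ^ 2 + G ^ 2) := by gcongr; exact norm_inner_le_numRad _ hx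
end

section
/- Let A, B be bounded linear operators on a complex Hilbert space H, let u ∈ H be a unit vector, and let p ≥ 1 be a real number. Then |⟨ABu, u⟩|^{2p} ≤ (1/2) · ( |⟨(AB)²u, u⟩|^p + ‖ABu‖^p · ‖B*A*u‖^p ). -/
/-!
Buzano's inequality `|⟨a, u⟩ ⟨u, b⟩| ≤ (|⟨a, b⟩| + ‖a‖ ‖b‖) / 2` for a unit vector `u` follows from
Cauchy–Schwarz applied to `a` and the reflection of `b` in the line `ℂ u`. With `a = T u` and
`b = T* u` for `T = A B` it gives `|⟨T u, u⟩|² ≤ (|⟨T² u, u⟩| + ‖T u‖ ‖T* u‖) / 2`, and raising this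
to the power `p` is handled by the convexity of `t ↦ t ^ p` on `[0, ∞)`.
-/

variable {H : Type*} [NormedAddCommGroup H] [InnerProductSpace ℂ H] [CompleteSpace H]

open Submodule

section Buzano

variable {𝕜 E : Type*} [RCLike 𝕜] [NormedAddCommGroup E] [InnerProductSpace 𝕜 E]

theorem inner_reflection_span_singleton {u : E} (hu : ‖u‖ = 1) (a b : E) :
    inner 𝕜 a ((𝕜 ∙ u).reflection b) = 2 * inner 𝕜 a u * inner 𝕜 u b - inner 𝕜 a b := by
  rw [reflection_apply, starProjection_unit_singleton 𝕜 hu, inner_sub_right, two_smul,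
    inner_add_right, inner_smul_right]
  ring

theorem norm_inner_mul_norm_inner_le {u : E} (hu : ‖u‖ = 1) (a b : E) :
    ‖inner 𝕜 a u‖ * ‖inner 𝕜 u b‖ ≤ (1 / 2) * (‖inner 𝕜 a b‖ + ‖a‖ * ‖b‖) := by
  set R := (𝕜 ∙ u).reflection
  have key : 2 * (‖inner 𝕜 a u‖ * ‖inner 𝕜 u b‖) ≤ ‖inner 𝕜 a b‖ + ‖a‖ * ‖b‖ :=
    calc 2 * (‖inner 𝕜 a u‖ * ‖inner 𝕜 u b‖) = ‖inner 𝕜 a b + inner 𝕜 a (R b)‖ := by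
          rw [inner_reflection_span_singleton hu, add_sub_cancel, norm_mul, norm_mul,
            RCLike.norm_two, mul_assoc]
      _ ≤ ‖inner 𝕜 a b‖ + ‖a‖ * ‖R b‖ := norm_add_le_of_le le_rfl (norm_inner_le_norm a (R b))
      _ = ‖inner 𝕜 a b‖ + ‖a‖ * ‖b‖ := by rw [LinearIsometryEquiv.norm_map]
  linarith

theorem ContinuousLinearMap.norm_inner_apply_sq_le [CompleteSpace E] (T : E →L[𝕜] E) {u : E}
    (hu : ‖u‖ = 1) :
    ‖inner 𝕜 (T u) u‖ ^ 2 ≤ (1 / 2) * (‖inner 𝕜 ((T ^ 2) u) u‖ + ‖T u‖ * ‖adjoint T u‖) := by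
  have h := norm_inner_mul_norm_inner_le (𝕜 := 𝕜) hu (T u) (adjoint T u)
  rwa [adjoint_inner_right, adjoint_inner_right, ← sq, ← mul_apply_eq_comp, ← sq] at h

end Buzano

theorem Real.rpow_midpoint_le {a b p : ℝ} (ha : 0 ≤ a) (hb : 0 ≤ b) (hp : 1 ≤ p) :
    ((1 / 2) * (a + b)) ^ p ≤ (1 / 2) * (a ^ p + b ^ p) := by
  simpa only [smul_eq_mul, ← mul_add] using (convexOn_rpow hp).2 (Set.mem_Ici.2 ha)
    (Set.mem_Ici.2 hb) (by norm_num : (0 : ℝ) ≤ 1 / 2) (by norm_num : (0 : ℝ) ≤ 1 / 2)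
    (add_halves 1)

theorem abs_inner_mul_rpow_le
    (A B : H →L[ℂ] H) (u : H) (hu : ‖u‖ = 1) (p : ℝ) (hp : 1 ≤ p) :
    ‖(inner ℂ ((A * B) u) u : ℂ)‖ ^ (2 * p) ≤
      (1 / 2) * (‖(inner ℂ (((A * B) ^ 2) u) u : ℂ)‖ ^ p +
        ‖(A * B) u‖ ^ p *
          ‖(ContinuousLinearMap.adjoint B * ContinuousLinearMap.adjoint A) u‖ ^ p) := by
  set T := A * B
  rw [show ContinuousLinearMap.adjoint B * ContinuousLinearMap.adjoint A =
      ContinuousLinearMap.adjoint T from (ContinuousLinearMap.adjoint_comp A B).symm,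
    Real.rpow_mul (norm_nonneg _),
    ← Real.mul_rpow (norm_nonneg _) (norm_nonneg _)]
  calc (‖inner ℂ (T u) u‖ ^ (2 : ℝ)) ^ p
      ≤ ((1 / 2) * (‖inner ℂ ((T ^ 2) u) u‖ + ‖T u‖ * ‖ContinuousLinearMap.adjoint T u‖)) ^ p := by
        gcongr
        exact_mod_cast T.norm_inner_apply_sq_le hu
    _ ≤ _ := Real.rpow_midpoint_le (norm_nonneg _) (by positivity) hp
end

section
/- Let H be a complex Hilbert space and let x, y, e ∈ H with ‖e‖ = 1. Then |⟨x, e⟩ · ⟨e, y⟩| ≤ (1/2) · ( |⟨x, y⟩| + ‖x‖·‖y‖ ). -/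
/-!
Reflecting `y` in the line `ℂ ∙ e` gives `z = 2⟪e, y⟫e - y` with `‖z‖ = ‖y‖`, and
`2⟪x, e⟫⟪e, y⟫ = ⟪x, z⟫ + ⟪x, y⟫`. The triangle inequality and Cauchy–Schwarz for `⟪x, z⟫`
give the bound. The same argument works for the orthogonal projection onto any subspace.
-/

open scoped InnerProductSpace

namespace Submodule

variable {𝕜 E : Type*} [RCLike 𝕜] [NormedAddCommGroup E] [InnerProductSpace 𝕜 E]
  (K : Submodule 𝕜 E) [K.HasOrthogonalProjection]

theorem inner_reflection_add_inner (x y : E) :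
    ⟪x, K.reflection y⟫_𝕜 + ⟪x, y⟫_𝕜 = 2 * ⟪x, K.starProjection y⟫_𝕜 := by
  rw [reflection_apply, inner_sub_right, two_smul, inner_add_right, two_mul]
  ring

theorem norm_inner_starProjection_le (x y : E) :
    ‖⟪x, K.starProjection y⟫_𝕜‖ ≤ (‖⟪x, y⟫_𝕜‖ + ‖x‖ * ‖y‖) / 2 := by
  have hreflection : ‖⟪x, K.reflection y⟫_𝕜‖ ≤ ‖x‖ * ‖y‖ := by
    simpa only [LinearIsometryEquiv.norm_map] using norm_inner_le_norm x (K.reflection y)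
  have htwice : 2 * ‖⟪x, K.starProjection y⟫_𝕜‖ ≤ ‖⟪x, K.reflection y⟫_𝕜‖ + ‖⟪x, y⟫_𝕜‖ := by
    calc 2 * ‖⟪x, K.starProjection y⟫_𝕜‖ = ‖⟪x, K.reflection y⟫_𝕜 + ⟪x, y⟫_𝕜‖ := by
          rw [inner_reflection_add_inner, norm_mul, RCLike.norm_two]
      _ ≤ ‖⟪x, K.reflection y⟫_𝕜‖ + ‖⟪x, y⟫_𝕜‖ := norm_add_le _ _
  linarith

end Submodule

theorem abs_inner_mul_inner_le_half
    {H : Type*} [NormedAddCommGroup H] [InnerProductSpace ℂ H]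
    (x y e : H) (he : ‖e‖ = 1) :
    ‖(inner ℂ x e : ℂ) * (inner ℂ e y : ℂ)‖ ≤
      (1 / 2) * (‖(inner ℂ x y : ℂ)‖ + ‖x‖ * ‖y‖) := by
  have hprojection : inner ℂ x e * inner ℂ e y = inner ℂ x ((ℂ ∙ e).starProjection y) := by
    rw [Submodule.starProjection_unit_singleton ℂ he, inner_smul_right, mul_comm]
  rw [hprojection, one_div_mul_eq_div]
  exact (ℂ ∙ e).norm_inner_starProjection_le x y
end
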